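/- If (a_1,…,a_n) is an n-tuple of strictly positive integers with M_n(a_1,…,a_n) = T or M_n(a_1,…,a_n) = −T, then there exists an index i with a_i = 1. (Since T has infinite order in SL_2(ℤ), this shows the converse of the finite-order criterion fails.) -/

import Mathlib

/-!
If every `aᵢ ≥ 2`, the top row `(p, -q)` of `Mprod [a₁, …, aₙ]` satisfies `0 ≤ q < p`: this holds
for the identity, and appending `a` maps `(p, q)` to `(a p - q, p)` with `a p - q ≥ 2p - q > p`.
The top rows `(1, 1)` of `T` and `(-1, -1)` of `-T` violate it.
-/

/-- The elementary matrix `[[a, -1], [1, 0]]`. -/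
def genMat (a : ℤ) : Matrix (Fin 2) (Fin 2) ℤ := !![a, -1; 1, 0]

/-- `Mprod [a₁, …, aₙ] = [[aₙ,-1],[1,0]] ⋯ [[a₁,-1],[1,0]]`. -/
def Mprod (l : List ℤ) : Matrix (Fin 2) (Fin 2) ℤ := ((l.map genMat).reverse).prod

lemma Mprod_cons (a : ℤ) (l : List ℤ) : Mprod (a :: l) = Mprod l * genMat a := by
  simp [Mprod]

lemma mul_genMat_apply_zero_zero (M : Matrix (Fin 2) (Fin 2) ℤ) (a : ℤ) :
    (M * genMat a) 0 0 = M 0 0 * a + M 0 1 := by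
  simp [genMat, Matrix.mul_apply, Fin.sum_univ_two]

lemma mul_genMat_apply_zero_one (M : Matrix (Fin 2) (Fin 2) ℤ) (a : ℤ) :
    (M * genMat a) 0 1 = -M 0 0 := by
  simp [genMat, Matrix.mul_apply, Fin.sum_univ_two]

lemma Mprod_top_row_of_two_le (l : List ℤ) (hl : ∀ x ∈ l, 2 ≤ x) :
    0 ≤ -Mprod l 0 1 ∧ -Mprod l 0 1 < Mprod l 0 0 := by
  induction l with
  | nil => simp [Mprod]
  | cons a l ih =>
    have ha : 2 ≤ a := hl a List.mem_cons_self
    obtain ⟨hq, hqp⟩ := ih fun x hx => hl x (List.mem_cons_of_mem a hx)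
    rw [Mprod_cons, mul_genMat_apply_zero_zero, mul_genMat_apply_zero_one]
    constructor <;> nlinarith

/-- Every positive solution of `Mₙ(a₁,…,aₙ) = ±T` contains a 1. -/
theorem stmt19 (l : List ℤ) (hpos : ∀ x ∈ l, 0 < x)
    (hsol : Mprod l = !![1, 1; 0, 1] ∨ Mprod l = -!![1, 1; 0, 1]) :
    ∃ x ∈ l, x = 1 := by
  by_contra! hne
  have hge : ∀ x ∈ l, 2 ≤ x := fun x hx => by
    have := hpos x hx
    have := hne x hx
    omega
  obtain ⟨hq, hqp⟩ := Mprod_top_row_of_two_le l hge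
  rcases hsol with hT | hT <;> simp [hT] at hq hqp
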